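/- There exist a recursively enumerable set I ⊆ ℕ and a family R : ℕ → ℕ → ℕ → Prop such that for every i ∈ I, R i is an equivalence relation on ℕ, the predicate fun t : ℕ × ℕ × ℕ => R t.1 t.2.1 t.2.2 is r.e., and yet the meet relation relating x and y iff R i x y holds for every i ∈ I (which is an equivalence relation) is not recursively enumerable: the predicate fun p : ℕ × ℕ => ∀ i ∈ I, R i p.1 p.2 is not r.e. -/

import Mathlib

/-!
Let `R i` identify `2n` with `2n + 1` exactly when the `n`-th program has not halted on input
`0` within `i` steps, and relate no other distinct numbers. Each `R i` is decidable uniformly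
in `i`, being the kernel of a primitive recursive map, but their meet identifies `2n` with
`2n + 1` iff the `n`-th program never halts, so an enumeration of the meet would enumerate the
complement of the halting problem.
-/

/-- A predicate is recursively enumerable (r.e.); `RePred` is Mathlib's name for it. -/
abbrev REPred' {α : Type} [Primcodable α] (p : α → Prop) : Prop := REPred p

open Nat.Partrec Nat.Partrec.Code

theorem REPred.comp {α β : Type} [Primcodable α] [Primcodable β] {p : β → Prop}
    (hp : REPred p) {f : α → β} (hf : Computable f) : REPred fun a => p (f a) :=
  Partrec.comp hp hf

theorem Equivalence.forall_mem {ι α : Type*} {I : Set ι} {r : ι → α → α → Prop}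
    (h : ∀ i ∈ I, Equivalence (r i)) : Equivalence fun x y => ∀ i ∈ I, r i x y where
  refl x i hi := (h i hi).refl x
  symm hxy i hi := (h i hi).symm (hxy i hi)
  trans hxy hyz i hi := (h i hi).trans (hxy i hi) (hyz i hi)

def collapse (s : ℕ → ℕ → Bool) (i x : ℕ) : ℕ :=
  bif s i (x / 2) then x else 2 * (x / 2)

theorem primrec_collapse {s : ℕ → ℕ → Bool} (hs : Primrec₂ s) :
    Primrec fun p : ℕ × ℕ => collapse s p.1 p.2 :=
  have half : Primrec fun p : ℕ × ℕ => p.2 / 2 := Primrec.nat_div.comp Primrec.snd (.const 2)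
  Primrec.cond (hs.comp Primrec.fst half) Primrec.snd (Primrec.nat_mul.comp (.const 2) half)

theorem collapse_double_eq_iff (s : ℕ → ℕ → Bool) (i n : ℕ) :
    collapse s i (2 * n) = collapse s i (2 * n + 1) ↔ s i n = false := by
  have h₀ : 2 * n / 2 = n := by omega
  have h₁ : (2 * n + 1) / 2 = n := by omega
  cases h : s i n <;> simp [collapse, h₀, h₁, h]

def haltsWithin (i n : ℕ) : Bool :=
  (evaln i (Denumerable.ofNat Code n) 0).isSome

theorem primrec_haltsWithin : Primrec₂ haltsWithin :=
  Primrec.option_isSome.comp <| primrec_evaln.comp <|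
    (Primrec.fst.pair ((Primrec.ofNat Code).comp Primrec.snd)).pair (.const 0)

theorem forall_haltsWithin_eq_false_iff (n : ℕ) :
    (∀ i, haltsWithin i n = false) ↔ ¬(eval (Denumerable.ofNat Code n) 0).Dom := by
  simp only [haltsWithin, Option.isSome_eq_false_iff, Option.isNone_iff_eq_none,
    Part.dom_iff_mem, evaln_complete, not_exists, Option.eq_none_iff_forall_not_mem]
  exact forall_comm

theorem not_rePred_forall_haltsWithin_eq_false :
    ¬REPred fun n => ∀ i, haltsWithin i n = false := fun h =>
  ComputablePred.halting_problem_not_re 0 <| (h.comp Computable.encode).of_eq fun c => by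
    rw [forall_haltsWithin_eq_false_iff, Denumerable.ofNat_encode]

/-- There are a recursively enumerable set `I ⊆ ℕ` and a uniformly r.e. family of
equivalence relations `R i` (for `i ∈ I`) whose meet—the relation relating `x` and
`y` iff `R i x y` for every `i ∈ I`—is an equivalence relation that is not
recursively enumerable. -/
theorem re_family_with_non_re_iInf :
    ∃ (I : Set ℕ) (R : ℕ → ℕ → ℕ → Prop),
      REPred' (fun i => i ∈ I) ∧
      (∀ i ∈ I, Equivalence (R i)) ∧
      REPred' (fun t : ℕ × ℕ × ℕ => R t.1 t.2.1 t.2.2) ∧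
      Equivalence (fun x y : ℕ => ∀ i ∈ I, R i x y) ∧
      ¬ REPred' (fun p : ℕ × ℕ => ∀ i ∈ I, R i p.1 p.2) := by
  have hequiv (i : ℕ) :
      Equivalence fun x y => collapse haltsWithin i x = collapse haltsWithin i y :=
    (Setoid.ker (collapse haltsWithin i)).iseqv
  have hc := primrec_collapse primrec_haltsWithin
  refine ⟨Set.univ, fun i x y => collapse haltsWithin i x = collapse haltsWithin i y,
    (Computable.const ()).partrec.dom_re.of_eq fun _ => by simp, fun i _ => hequiv i,
    ?_, Equivalence.forall_mem fun i _ => hequiv i, fun hre => ?_⟩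
  · exact (Primrec.eq.comp (hc.comp (Primrec.fst.pair (Primrec.fst.comp Primrec.snd)))
      (hc.comp (Primrec.fst.pair (Primrec.snd.comp Primrec.snd)))).computablePred.to_re
  · have hpair : Computable fun n : ℕ => (2 * n, 2 * n + 1) :=
      ((Primrec.nat_mul.comp (.const 2) .id).pair
        (Primrec.succ.comp (Primrec.nat_mul.comp (.const 2) .id))).to_comp
    exact not_rePred_forall_haltsWithin_eq_false <| (hre.comp hpair).of_eq fun n => by
      simp [collapse_double_eq_iff]
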